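/- Fresh induction: Let φ : term → param → Prop and φAbs : abs → param → Prop. Assume: (1) for every xs and p, |varsOf p xs| < |var|; (2) for all xs, x, p, φ (Var xs x) p; (3) for all δ, inp, binp, p, if |dom inp| < |var|, |dom binp| < |var|, ↑(λX. good X ∧ ∀q. φ X q) inp and ↑(λA. goodAbs A ∧ ∀q. φAbs A q) binp, then φ (Op δ inp binp) p; (4) for all xs, x, X, p, if good X, φ X p holds, and x ∉ varsOf p xs, then φAbs (Abs xs x X) p. Then φ X p holds for every good term X and every parameter p, and φAbs A p holds for every good abstraction A and every parameter p. -/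

import Mathlib

open scoped Classical

universe u

section Binding

variable (var varsort index bindex opsym : Type u)

/-! ### Inputs -/

/-- An `(α,β)`-input: a partial function from `α` to `β`. -/
abbrev Input (α β : Type u) : Type u := α → Option β

/-- The domain of an input. -/
def idom {α β : Type u} (inp : Input α β) : Set α := {a | inp a ≠ none}

/-- The componentwise lifting of a predicate to inputs. -/
def liftP {α β : Type u} (P : β → Prop) (inp : Input α β) : Prop :=
  ∀ a b, inp a = some b → P b

/-- The componentwise lifting of a function to inputs. -/
def liftF {α β γ : Type u} (f : β → γ) (inp : Input α β) : Input α γ :=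
  fun a => (inp a).map f

/-- An input is small if its domain has cardinality smaller than that of `var`. -/
def smallDom {α β : Type u} (inp : Input α β) : Prop :=
  Cardinal.mk (idom inp) < Cardinal.mk var

/-! ### Quasiterms -/

mutual
/-- Quasiterms: raw terms before quotienting by alpha-equivalence. -/
inductive QTerm : Type u where
  | qVar : varsort → var → QTerm
  | qOp : opsym → (index → Option QTerm) → (bindex → Option QAbs) → QTerm
/-- Quasiabstractions. -/
inductive QAbs : Type u where
  | qAbs : varsort → var → QTerm → QAbs
end

/-- Transposition of two variables. -/
noncomputable def swapVar (z1 z2 x : var) : var :=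
  if x = z1 then z2 else if x = z2 then z1 else x

/-- Sort-aware transposition of variables (acts only on variables of varsort `zs`). -/
noncomputable def swapVarS (zs xs : varsort) (z1 z2 x : var) : var :=
  if xs = zs then swapVar var z1 z2 x else x

variable {var varsort index bindex opsym}

/-- Swapping of the variables `z1`, `z2` at varsort `zs` in a quasiterm
(transposing them everywhere, including binding positions). -/
noncomputable def qSwap (z1 z2 : var) (zs : varsort) :
    QTerm var varsort index bindex opsym → QTerm var varsort index bindex opsym :=
  QTerm.rec (motive_1 := fun _ => QTerm var varsort index bindex opsym)
    (motive_2 := fun _ => QAbs var varsort index bindex opsym)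
    (motive_3 := fun _ => Option (QTerm var varsort index bindex opsym))
    (motive_4 := fun _ => Option (QAbs var varsort index bindex opsym))
    (fun xs x => .qVar xs (swapVarS var varsort zs xs z1 z2 x))
    (fun d _ _ rinp rbinp => .qOp d rinp rbinp)
    (fun xs x _ rX => .qAbs xs (swapVarS var varsort zs xs z1 z2 x) rX)
    none (fun _ r => some r) none (fun _ r => some r)

/-- Swapping of variables in a quasiabstraction. -/
noncomputable def qSwapAbs (z1 z2 : var) (zs : varsort) :
    QAbs var varsort index bindex opsym → QAbs var varsort index bindex opsym
  | .qAbs xs x X => .qAbs xs (swapVarS var varsort zs xs z1 z2 x) (qSwap z1 z2 zs X)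

/-! ### Freshness and goodness -/

mutual
/-- `QFresh ys y X`: the variable `y` of varsort `ys` has no free occurrence in `X`. -/
inductive QFresh : varsort → var → QTerm var varsort index bindex opsym → Prop where
  | qVar : ∀ {ys y xs x}, (ys, y) ≠ (xs, x) → QFresh ys y (.qVar xs x)
  | qOp : ∀ {ys y d inp binp}, (∀ i X, inp i = some X → QFresh ys y X) →
      (∀ j A, binp j = some A → QFreshAbs ys y A) → QFresh ys y (.qOp d inp binp)
/-- Freshness for quasiabstractions. -/
inductive QFreshAbs : varsort → var → QAbs var varsort index bindex opsym → Prop where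
  | qAbs_bound : ∀ {xs x X}, QFreshAbs xs x (.qAbs xs x X)
  | qAbs_body : ∀ {ys y xs x X}, QFresh ys y X → QFreshAbs ys y (.qAbs xs x X)
end

mutual
/-- Good quasiterms: all constructors branch less than `|var|`. -/
inductive QGood : QTerm var varsort index bindex opsym → Prop where
  | qVar : ∀ {xs x}, QGood (.qVar xs x)
  | qOp : ∀ {d inp binp}, (∀ i X, inp i = some X → QGood X) →
      (∀ j A, binp j = some A → QGoodAbs A) →
      smallDom var inp → smallDom var binp → QGood (.qOp d inp binp)
/-- Good quasiabstractions. -/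
inductive QGoodAbs : QAbs var varsort index bindex opsym → Prop where
  | qAbs : ∀ {xs x X}, QGood X → QGoodAbs (.qAbs xs x X)
end

/-! ### Alpha-equivalence -/

mutual
/-- Alpha-equivalence of quasiterms. -/
inductive Alpha : QTerm var varsort index bindex opsym →
    QTerm var varsort index bindex opsym → Prop where
  | qVar : ∀ {xs x}, Alpha (.qVar xs x) (.qVar xs x)
  | qOp : ∀ {d inp binp inp' binp'},
      (∀ i, inp i = none ↔ inp' i = none) →
      (∀ i X X', inp i = some X → inp' i = some X' → Alpha X X') →
      (∀ j, binp j = none ↔ binp' j = none) →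
      (∀ j A A', binp j = some A → binp' j = some A' → AlphaAbs A A') →
      Alpha (.qOp d inp binp) (.qOp d inp' binp')
/-- Alpha-equivalence of quasiabstractions (the exists-fresh formulation). -/
inductive AlphaAbs : QAbs var varsort index bindex opsym →
    QAbs var varsort index bindex opsym → Prop where
  | qAbs : ∀ {xs x x' X X' y}, y ∉ ({x, x'} : Set var) →
      QFresh xs y X → QFresh xs y X' →
      Alpha (qSwap y x xs X) (qSwap y x' xs X') →
      AlphaAbs (.qAbs xs x X) (.qAbs xs x' X')
end

/-! ### Terms and abstractions as quotients -/

variable (var varsort index bindex opsym)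

/-- Terms: quasiterms modulo alpha-equivalence. -/
def Term : Type u := Quot (@Alpha var varsort index bindex opsym)

/-- Abstractions: quasiabstractions modulo alpha-equivalence. -/
def Abstr : Type u := Quot (@AlphaAbs var varsort index bindex opsym)

variable {var varsort index bindex opsym}

/-- The projection from quasiterms to terms. -/
def tmk : QTerm var varsort index bindex opsym → Term var varsort index bindex opsym :=
  Quot.mk _

/-- The projection from quasiabstractions to abstractions. -/
def amk : QAbs var varsort index bindex opsym → Abstr var varsort index bindex opsym :=
  Quot.mk _

/-- A representative of a term. -/
noncomputable def trep (X : Term var varsort index bindex opsym) :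
    QTerm var varsort index bindex opsym := Quot.out X

/-- A representative of an abstraction. -/
noncomputable def arep (A : Abstr var varsort index bindex opsym) :
    QAbs var varsort index bindex opsym := Quot.out A

/-- Good terms. -/
def good (X : Term var varsort index bindex opsym) : Prop := QGood (trep X)

/-- Good abstractions. -/
def goodAbs (A : Abstr var varsort index bindex opsym) : Prop := QGoodAbs (arep A)

/-- The variable-injection constructor on terms. -/
def Var (xs : varsort) (x : var) : Term var varsort index bindex opsym :=
  tmk (.qVar xs x)

/-- The operation constructor on terms. -/
noncomputable def Op (d : opsym) (inp : Input index (Term var varsort index bindex opsym))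
    (binp : Input bindex (Abstr var varsort index bindex opsym)) :
    Term var varsort index bindex opsym :=
  tmk (.qOp d (liftF trep inp) (liftF arep binp))

/-- The abstraction constructor. -/
noncomputable def Abs (xs : varsort) (x : var) (X : Term var varsort index bindex opsym) :
    Abstr var varsort index bindex opsym :=
  amk (.qAbs xs x (trep X))

/-- Freshness on terms. -/
def fresh (ys : varsort) (y : var) (X : Term var varsort index bindex opsym) : Prop :=
  QFresh ys y (trep X)

/-- Freshness on abstractions. -/
def freshAbs (ys : varsort) (y : var) (A : Abstr var varsort index bindex opsym) : Prop :=
  QFreshAbs ys y (arep A)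

/-- Swapping on terms. -/
noncomputable def tswap (X : Term var varsort index bindex opsym)
    (z1 z2 : var) (zs : varsort) : Term var varsort index bindex opsym :=
  tmk (qSwap z1 z2 zs (trep X))

/-! ### Substitution -/

mutual
/-- The graph of capture-avoiding substitution on quasiterms:
`QSubst X Y y ys Z` means that `Z` is a result of substituting `Y` for the free
occurrences of the variable `y` of varsort `ys` in `X` (along a capture-free
representative). -/
inductive QSubst : QTerm var varsort index bindex opsym →
    QTerm var varsort index bindex opsym → var → varsort →
    QTerm var varsort index bindex opsym → Prop where
  | var_eq : ∀ {Y y ys}, QSubst (.qVar ys y) Y y ys Y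
  | var_ne : ∀ {Y y ys xs x}, (xs, x) ≠ (ys, y) → QSubst (.qVar xs x) Y y ys (.qVar xs x)
  | op : ∀ {Y y ys d inp binp inp' binp'},
      (∀ i, inp i = none ↔ inp' i = none) →
      (∀ i X X', inp i = some X → inp' i = some X' → QSubst X Y y ys X') →
      (∀ j, binp j = none ↔ binp' j = none) →
      (∀ j A A', binp j = some A → binp' j = some A' → QSubstAbs A Y y ys A') →
      QSubst (.qOp d inp binp) Y y ys (.qOp d inp' binp')
/-- The graph of capture-avoiding substitution on quasiabstractions. -/
inductive QSubstAbs : QAbs var varsort index bindex opsym →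
    QTerm var varsort index bindex opsym → var → varsort →
    QAbs var varsort index bindex opsym → Prop where
  | abs : ∀ {Y y ys xs x X X'}, (xs, x) ≠ (ys, y) → QFresh xs x Y →
      QSubst X Y y ys X' → QSubstAbs (.qAbs xs x X) Y y ys (.qAbs xs x X')
end

/-- The graph of capture-avoiding substitution on terms. -/
def SubstRel (X Y : Term var varsort index bindex opsym) (y : var) (ys : varsort)
    (Z : Term var varsort index bindex opsym) : Prop :=
  ∃ qX qZ, tmk qX = X ∧ tmk qZ = Z ∧ QSubst qX (trep Y) y ys qZ

/-- Capture-avoiding substitution on terms: `subst X Y y ys` is `X[Y/y]_ys`. -/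
noncomputable def subst (X Y : Term var varsort index bindex opsym)
    (y : var) (ys : varsort) : Term var varsort index bindex opsym :=
  if h : ∃ Z, SubstRel X Y y ys Z then h.choose else X

/-- The graph of capture-avoiding substitution on abstractions. -/
def SubstAbsRel (A : Abstr var varsort index bindex opsym)
    (Y : Term var varsort index bindex opsym) (y : var) (ys : varsort)
    (B : Abstr var varsort index bindex opsym) : Prop :=
  ∃ qA qB, amk qA = A ∧ amk qB = B ∧ QSubstAbs qA (trep Y) y ys qB

/-- Capture-avoiding substitution on abstractions: `substAbs A Y y ys` is `A[Y/y]_ys`. -/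
noncomputable def substAbs (A : Abstr var varsort index bindex opsym)
    (Y : Term var varsort index bindex opsym) (y : var) (ys : varsort) :
    Abstr var varsort index bindex opsym :=
  if h : ∃ B, SubstAbsRel A Y y ys B then h.choose else A

/-! ### Parallel substitution -/

mutual
/-- The graph of capture-avoiding parallel substitution on quasiterms, along an
assignment `ρ : varsort → var → Option qterm`. -/
inductive QPSubst : QTerm var varsort index bindex opsym →
    (varsort → var → Option (QTerm var varsort index bindex opsym)) →
    QTerm var varsort index bindex opsym → Prop where
  | var_some : ∀ {ρ xs x Y}, ρ xs x = some Y → QPSubst (.qVar xs x) ρ Y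
  | var_none : ∀ {ρ xs x}, ρ xs x = none → QPSubst (.qVar xs x) ρ (.qVar xs x)
  | op : ∀ {ρ d inp binp inp' binp'},
      (∀ i, inp i = none ↔ inp' i = none) →
      (∀ i X X', inp i = some X → inp' i = some X' → QPSubst X ρ X') →
      (∀ j, binp j = none ↔ binp' j = none) →
      (∀ j A A', binp j = some A → binp' j = some A' → QPSubstAbs A ρ A') →
      QPSubst (.qOp d inp binp) ρ (.qOp d inp' binp')
/-- The graph of capture-avoiding parallel substitution on quasiabstractions. -/
inductive QPSubstAbs : QAbs var varsort index bindex opsym →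
    (varsort → var → Option (QTerm var varsort index bindex opsym)) →
    QAbs var varsort index bindex opsym → Prop where
  | abs : ∀ {ρ xs x X X'}, ρ xs x = none →
      (∀ ys y Y, ρ ys y = some Y → QFresh xs x Y) →
      QPSubst X ρ X' → QPSubstAbs (.qAbs xs x X) ρ (.qAbs xs x X')
end

/-- Turning a term-valued assignment into a quasiterm-valued one, by picking
representatives. -/
noncomputable def qassign (ρ : varsort → var → Option (Term var varsort index bindex opsym)) :
    varsort → var → Option (QTerm var varsort index bindex opsym) :=
  fun xs x => (ρ xs x).map trep

/-- The graph of parallel substitution on terms. -/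
def PSubstRel (X : Term var varsort index bindex opsym)
    (ρ : varsort → var → Option (Term var varsort index bindex opsym))
    (Z : Term var varsort index bindex opsym) : Prop :=
  ∃ qX qZ, tmk qX = X ∧ tmk qZ = Z ∧ QPSubst qX (qassign ρ) qZ

/-- Capture-avoiding parallel substitution on terms: `psubst X ρ` is `X[ρ]`. -/
noncomputable def psubst (X : Term var varsort index bindex opsym)
    (ρ : varsort → var → Option (Term var varsort index bindex opsym)) :
    Term var varsort index bindex opsym :=
  if h : ∃ Z, PSubstRel X ρ Z then h.choose else X

/-- The graph of parallel substitution on abstractions. -/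
def PSubstAbsRel (A : Abstr var varsort index bindex opsym)
    (ρ : varsort → var → Option (Term var varsort index bindex opsym))
    (B : Abstr var varsort index bindex opsym) : Prop :=
  ∃ qA qB, amk qA = A ∧ amk qB = B ∧ QPSubstAbs qA (qassign ρ) qB

/-- Capture-avoiding parallel substitution on abstractions. -/
noncomputable def psubstAbs (A : Abstr var varsort index bindex opsym)
    (ρ : varsort → var → Option (Term var varsort index bindex opsym)) :
    Abstr var varsort index bindex opsym :=
  if h : ∃ B, PSubstAbsRel A ρ B then h.choose else A

/-!
Fresh induction is structural induction on good quasiterms, strengthened so that the hypothesis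
for the body of an abstraction holds for all of its renamings by swapping. In the abstraction
case the bound variable `x` can then be replaced by a variable `y` outside the small set
`varsOf p xs` and fresh for the body `X`, since `qAbs xs x X` is alpha-equivalent to
`qAbs xs y (X[y ↔ x])`; fresh variables exist because, by regularity of `|var|`, a good
quasiterm has fewer than `|var|` free variables. Transporting the result to terms needs
`trep (tmk X)` to be alpha-equivalent to `X`, i.e. that alpha-equivalence is an equivalence on
good quasiterms; reflexivity and transitivity are proved by the same strengthened induction.
-/

open Cardinal

local notation "Q" => QTerm var varsort index bindex opsym
local notation "QA" => QAbs var varsort index bindex opsym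

theorem idom_map {α β γ : Type u} (f : β → γ) (inp : Input α β) :
    idom (fun a => (inp a).map f) = idom inp := by
  ext a; simp [idom]

theorem smallDom_map {α β γ : Type u} {f : β → γ} {inp : Input α β} (h : smallDom var inp) :
    smallDom var (fun a => (inp a).map f) := by
  rwa [smallDom, idom_map]

theorem smallDom_congr {α β γ : Type u} {inp : Input α β} {inp' : Input α γ}
    (h : ∀ a, inp a = none ↔ inp' a = none) (hs : smallDom var inp) : smallDom var inp' := by
  have : idom inp' = idom inp := by
    ext a; exact not_congr (h a).symm
  rwa [smallDom, this]

theorem exists_eq_some_of_none_iff {α β γ : Type*} {f : α → Option β} {g : α → Option γ}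
    (hfg : ∀ a, f a = none ↔ g a = none) {a : α} {b : β} (hb : f a = some b) :
    ∃ c, g a = some c :=
  Option.ne_none_iff_exists'.1 fun h => by simp [(hfg a).2 h] at hb

theorem liftP_of_liftP {α β γ : Type u} {P : β → Prop} {P' : γ → Prop} {inp : Input α β}
    {inp' : Input α γ} (hdom : ∀ a, inp a = none ↔ inp' a = none)
    (himp : ∀ a b c, inp a = some b → inp' a = some c → P b → P' c) (h : liftP P inp) :
    liftP P' inp' := by
  intro a c hc
  obtain ⟨b, hb⟩ := exists_eq_some_of_none_iff (fun a => (hdom a).symm) hc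
  exact himp a b c hb hc (h a b hb)

theorem liftP_map {α β γ : Type u} {P : γ → Prop} {f : β → γ} {inp : Input α β}
    (h : ∀ a b, inp a = some b → P (f b)) : liftP P (fun a => (inp a).map f) := by
  intro a c hc
  obtain ⟨b, hb, rfl⟩ := Option.map_eq_some_iff.1 hc
  exact h a b hb

theorem mk_lt_of_finite (hreg : (#var).IsRegular) {α : Type u} {s : Set α} (hs : s.Finite) :
    #s < #var :=
  hs.lt_aleph0.trans_le hreg.aleph0_le

theorem mk_union_lt (hreg : (#var).IsRegular) {s t : Set var} (hs : #s < #var)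
    (ht : #t < #var) : #(s ∪ t : Set var) < #var :=
  (mk_union_le s t).trans_lt (add_lt_of_lt hreg.aleph0_le hs ht)

theorem mk_setOf_input_lt (hreg : (#var).IsRegular) {α β : Type u} {inp : Input α β}
    (hinp : smallDom var inp) {F : β → Set var} (hF : ∀ a b, inp a = some b → #(F b) < #var) :
    #{v | ∃ a b, inp a = some b ∧ v ∈ F b} < #var := by
  have hsub : {v | ∃ a b, inp a = some b ∧ v ∈ F b} ⊆ ⋃ a ∈ idom inp, (inp a).elim ∅ F := by
    rintro v ⟨a, b, hab, hv⟩
    exact Set.mem_biUnion (x := a) (by simp [idom, hab]) (by simpa [hab] using hv)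
  refine (mk_le_mk_of_subset hsub).trans_lt
    ((card_biUnion_lt_iff_forall_of_isRegular hreg hinp).2 fun a ha => ?_)
  obtain ⟨b, hab⟩ := Option.ne_none_iff_exists'.1 ha
  simpa [hab] using hF a b hab

@[simp] theorem swapVar_left (z1 z2 : var) : swapVar var z1 z2 z1 = z2 := by
  simp [swapVar]

@[simp] theorem swapVar_right (z1 z2 : var) : swapVar var z1 z2 z2 = z1 := by
  unfold swapVar; split_ifs <;> simp_all

theorem swapVar_of_ne {z1 z2 x : var} (h1 : x ≠ z1) (h2 : x ≠ z2) : swapVar var z1 z2 x = x := by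
  simp [swapVar, h1, h2]

@[simp] theorem swapVar_swapVar (z1 z2 x : var) :
    swapVar var z1 z2 (swapVar var z1 z2 x) = x := by
  unfold swapVar; split_ifs <;> simp_all

theorem swapVar_swapVar_of_ne {u a b m : var} (hmu : m ≠ u) (hmb : m ≠ b) :
    swapVar var u b (swapVar var b a m) = swapVar var u a m := by
  by_cases hma : m = a
  · simp [hma]
  · rw [swapVar_of_ne hmb hma, swapVar_of_ne hmu hmb, swapVar_of_ne hmu hma]

theorem swapVarS_self (xs : varsort) (z1 z2 x : var) :
    swapVarS var varsort xs xs z1 z2 x = swapVar var z1 z2 x := if_pos rfl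

theorem swapVarS_of_ne {zs xs : varsort} (h : xs ≠ zs) (z1 z2 x : var) :
    swapVarS var varsort zs xs z1 z2 x = x := if_neg h

@[simp] theorem swapVarS_swapVarS (zs xs : varsort) (z1 z2 x : var) :
    swapVarS var varsort zs xs z1 z2 (swapVarS var varsort zs xs z1 z2 x) = x := by
  unfold swapVarS; split_ifs <;> simp

theorem swapVarS_injective (zs xs : varsort) (z1 z2 : var) :
    Function.Injective (swapVarS var varsort zs xs z1 z2) :=
  Function.LeftInverse.injective (swapVarS_swapVarS zs xs z1 z2)

theorem QTerm.induction {P : Q → Prop} {PA : QA → Prop}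
    (hVar : ∀ xs x, P (.qVar xs x))
    (hOp : ∀ d inp binp, (∀ i X, inp i = some X → P X) →
      (∀ j A, binp j = some A → PA A) → P (.qOp d inp binp))
    (hAbs : ∀ xs x X, P X → PA (.qAbs xs x X)) :
    (∀ X, P X) ∧ (∀ A, PA A) := by
  have hP : ∀ X : Q, P X := fun X =>
    QTerm.rec (motive_1 := P) (motive_2 := PA)
      (motive_3 := fun o => ∀ X, o = some X → P X)
      (motive_4 := fun o => ∀ A, o = some A → PA A)
      hVar hOp hAbs
      (fun _ h => by cases h) (fun _ ih _ h => by cases h; exact ih)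
      (fun _ h => by cases h) (fun _ ih _ h => by cases h; exact ih) X
  exact ⟨hP, fun ⟨xs, x, X⟩ => hAbs xs x X (hP X)⟩

theorem QGood.induction {P : Q → Prop} {PA : QA → Prop}
    (hVar : ∀ xs x, P (.qVar xs x))
    (hOp : ∀ d inp binp, (∀ i X, inp i = some X → QGood X) →
      (∀ j A, binp j = some A → QGoodAbs A) → smallDom var inp → smallDom var binp →
      (∀ i X, inp i = some X → P X) → (∀ j A, binp j = some A → PA A) →
      P (.qOp d inp binp))
    (hAbs : ∀ xs x X, QGood X → P X → PA (.qAbs xs x X)) :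
    (∀ X, QGood X → P X) ∧ (∀ A, QGoodAbs A → PA A) :=
  ⟨fun _ h => QGood.rec (motive_1 := fun X _ => P X) (motive_2 := fun A _ => PA A)
      (fun {xs x} => hVar xs x) (fun {d inp binp} => hOp d inp binp)
      (fun {xs x X} => hAbs xs x X) h,
   fun _ h => QGoodAbs.rec (motive_1 := fun X _ => P X) (motive_2 := fun A _ => PA A)
      (fun {xs x} => hVar xs x) (fun {d inp binp} => hOp d inp binp)
      (fun {xs x X} => hAbs xs x X) h⟩

theorem QFresh.induction {ys : varsort} {y : var} {P : Q → Prop} {PA : QA → Prop}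
    (hVar : ∀ xs x, (ys, y) ≠ (xs, x) → P (.qVar xs x))
    (hOp : ∀ d inp binp, (∀ i X, inp i = some X → QFresh ys y X) →
      (∀ j A, binp j = some A → QFreshAbs ys y A) →
      (∀ i X, inp i = some X → P X) → (∀ j A, binp j = some A → PA A) →
      P (.qOp d inp binp))
    (hBound : ∀ X, PA (.qAbs ys y X))
    (hAbs : ∀ xs x X, QFresh ys y X → P X → PA (.qAbs xs x X)) :
    (∀ X, QFresh ys y X → P X) ∧ (∀ A, QFreshAbs ys y A → PA A) :=
  ⟨fun _ h => QFresh.rec (motive_1 := fun X _ => P X) (motive_2 := fun A _ => PA A)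
      (fun {xs x} => hVar xs x) (fun {d inp binp} => hOp d inp binp)
      (fun {X} => hBound X) (fun {xs x X} => hAbs xs x X) h,
   fun _ h => QFreshAbs.rec (motive_1 := fun X _ => P X) (motive_2 := fun A _ => PA A)
      (fun {xs x} => hVar xs x) (fun {d inp binp} => hOp d inp binp)
      (fun {X} => hBound X) (fun {xs x X} => hAbs xs x X) h⟩

theorem Alpha.induction {P : Q → Q → Prop} {PA : QA → QA → Prop}
    (hVar : ∀ xs x, P (.qVar xs x) (.qVar xs x))
    (hOp : ∀ d (inp inp' : index → Option Q) (binp binp' : bindex → Option QA),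
      (∀ i, inp i = none ↔ inp' i = none) →
      (∀ i X X', inp i = some X → inp' i = some X' → Alpha X X') →
      (∀ j, binp j = none ↔ binp' j = none) →
      (∀ j A A', binp j = some A → binp' j = some A' → AlphaAbs A A') →
      (∀ i X X', inp i = some X → inp' i = some X' → P X X') →
      (∀ j A A', binp j = some A → binp' j = some A' → PA A A') →
      P (.qOp d inp binp) (.qOp d inp' binp'))
    (hAbs : ∀ xs (x x' : var) X X' y, y ∉ ({x, x'} : Set var) →
      QFresh xs y X → QFresh xs y X' → Alpha (qSwap y x xs X) (qSwap y x' xs X') →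
      P (qSwap y x xs X) (qSwap y x' xs X') → PA (.qAbs xs x X) (.qAbs xs x' X')) :
    (∀ X Y, Alpha X Y → P X Y) ∧ (∀ A B, AlphaAbs A B → PA A B) :=
  ⟨fun _ _ h => Alpha.rec (motive_1 := fun X Y _ => P X Y) (motive_2 := fun A B _ => PA A B)
      (fun {xs x} => hVar xs x) (fun {d inp binp inp' binp'} => hOp d inp inp' binp binp')
      (fun {xs x x' X X' y} => hAbs xs x x' X X' y) h,
   fun _ _ h => AlphaAbs.rec (motive_1 := fun X Y _ => P X Y) (motive_2 := fun A B _ => PA A B)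
      (fun {xs x} => hVar xs x) (fun {d inp binp inp' binp'} => hOp d inp inp' binp binp')
      (fun {xs x x' X X' y} => hAbs xs x x' X X' y) h⟩

@[simp] theorem qSwap_qVar (z1 z2 : var) (zs xs : varsort) (x : var) :
    qSwap z1 z2 zs (.qVar xs x : Q) = .qVar xs (swapVarS var varsort zs xs z1 z2 x) := rfl

@[simp] theorem qSwap_qOp (z1 z2 : var) (zs : varsort) (d : opsym)
    (inp : index → Option Q) (binp : bindex → Option QA) :
    qSwap z1 z2 zs (.qOp d inp binp) =
      .qOp d (fun i => (inp i).map (qSwap z1 z2 zs))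
        (fun j => (binp j).map (qSwapAbs z1 z2 zs)) := by
  conv_lhs => whnf
  congr 1
  · funext i; cases inp i <;> rfl
  · funext j; rcases binp j with _ | ⟨xs, x, X⟩ <;> rfl

@[simp] theorem qSwapAbs_qAbs (z1 z2 : var) (zs xs : varsort) (x : var) (X : Q) :
    qSwapAbs z1 z2 zs (.qAbs xs x X) =
      .qAbs xs (swapVarS var varsort zs xs z1 z2 x) (qSwap z1 z2 zs X) := rfl

@[simp] theorem qSwap_qSwap (z1 z2 : var) (zs : varsort) (X : Q) :
    qSwap z1 z2 zs (qSwap z1 z2 zs X) = X := by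
  refine (QTerm.induction (P := fun X => qSwap z1 z2 zs (qSwap z1 z2 zs X) = X)
    (PA := fun A => qSwapAbs z1 z2 zs (qSwapAbs z1 z2 zs A) = A)
    (fun xs x => by simp) (fun d inp binp hinp hbinp => ?_) (fun xs x X hX => by simp [hX])).1 X
  simp only [qSwap_qOp, Option.map_map]
  congr 1
  · funext i; rcases h : inp i with _ | X
    · rfl
    · simp [hinp i X h]
  · funext j; rcases h : binp j with _ | A
    · rfl
    · simp [hbinp j A h]

noncomputable def qSwapL (l : List (var × var × varsort)) (X : Q) : Q :=
  l.foldr (fun t Y => qSwap t.1 t.2.1 t.2.2 Y) X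

noncomputable def qSwapLAbs (l : List (var × var × varsort)) (A : QA) : QA :=
  l.foldr (fun t B => qSwapAbs t.1 t.2.1 t.2.2 B) A

noncomputable def swapVarL (l : List (var × var × varsort)) (xs : varsort) (x : var) : var :=
  l.foldr (fun t v => swapVarS var varsort t.2.2 xs t.1 t.2.1 v) x

@[simp] theorem qSwapL_nil (X : Q) : qSwapL [] X = X := rfl

@[simp] theorem qSwapL_cons (t : var × var × varsort) (l : List (var × var × varsort)) (X : Q) :
    qSwapL (t :: l) X = qSwap t.1 t.2.1 t.2.2 (qSwapL l X) := rfl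

@[simp] theorem qSwapLAbs_cons (t : var × var × varsort) (l : List (var × var × varsort))
    (A : QA) : qSwapLAbs (t :: l) A = qSwapAbs t.1 t.2.1 t.2.2 (qSwapLAbs l A) := rfl

@[simp] theorem swapVarL_nil (xs : varsort) (x : var) : swapVarL [] xs x = x := rfl

@[simp] theorem swapVarL_cons (t : var × var × varsort) (l : List (var × var × varsort))
    (xs : varsort) (x : var) :
    swapVarL (t :: l) xs x = swapVarS var varsort t.2.2 xs t.1 t.2.1 (swapVarL l xs x) := rfl

theorem qSwapL_append (l1 l2 : List (var × var × varsort)) (X : Q) :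
    qSwapL (l1 ++ l2) X = qSwapL l1 (qSwapL l2 X) :=
  List.foldr_append

theorem swapVarL_append (l1 l2 : List (var × var × varsort)) (xs : varsort) (x : var) :
    swapVarL (l1 ++ l2) xs x = swapVarL l1 xs (swapVarL l2 xs x) :=
  List.foldr_append

theorem swapVarL_injective (l : List (var × var × varsort)) (xs : varsort) :
    Function.Injective (swapVarL l xs) := by
  induction l with
  | nil => exact Function.injective_id
  | cons t l ih => exact (swapVarS_injective _ _ _ _).comp ih

@[simp] theorem qSwapL_qVar (l : List (var × var × varsort)) (xs : varsort) (x : var) :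
    qSwapL l (.qVar xs x : Q) = .qVar xs (swapVarL l xs x) := by
  induction l with
  | nil => rfl
  | cons t l ih => simp [ih]

@[simp] theorem qSwapL_qOp (l : List (var × var × varsort)) (d : opsym)
    (inp : index → Option Q) (binp : bindex → Option QA) :
    qSwapL l (.qOp d inp binp) =
      .qOp d (fun i => (inp i).map (qSwapL l)) (fun j => (binp j).map (qSwapLAbs l)) := by
  induction l with
  | nil =>
    rw [qSwapL_nil]
    congr 1
    · funext i; cases inp i <;> rfl
    · funext j; cases binp j <;> rfl
  | cons t l ih => simp only [qSwapL_cons, ih, qSwap_qOp, Option.map_map]; rfl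

@[simp] theorem qSwapLAbs_qAbs (l : List (var × var × varsort)) (xs : varsort) (x : var)
    (X : Q) : qSwapLAbs l (.qAbs xs x X) = .qAbs xs (swapVarL l xs x) (qSwapL l X) := by
  induction l with
  | nil => rfl
  | cons t l ih => simp [ih]

theorem qGood_qSwap {z1 z2 : var} {zs : varsort} :
    (∀ {X : Q}, QGood X → QGood (qSwap z1 z2 zs X)) ∧
    (∀ {A : QA}, QGoodAbs A → QGoodAbs (qSwapAbs z1 z2 zs A)) := by
  suffices h : (∀ X : Q, QGood X → QGood (qSwap z1 z2 zs X)) ∧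
      (∀ A : QA, QGoodAbs A → QGoodAbs (qSwapAbs z1 z2 zs A)) from
    ⟨fun {X} => h.1 X, fun {A} => h.2 A⟩
  refine QGood.induction (fun _ _ => .qVar) ?_ (fun _ _ _ _ ih => .qAbs ih)
  intro d inp binp _ _ hsinp hsbinp ihinp ihbinp
  rw [qSwap_qOp]
  exact .qOp (liftP_map ihinp) (liftP_map ihbinp) (smallDom_map hsinp) (smallDom_map hsbinp)

theorem qGood_qSwap_iff {z1 z2 : var} {zs : varsort} {X : Q} :
    QGood (qSwap z1 z2 zs X) ↔ QGood X :=
  ⟨fun h => qSwap_qSwap z1 z2 zs X ▸ qGood_qSwap.1 h, qGood_qSwap.1⟩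

theorem qGood_qSwapL (l : List (var × var × varsort)) :
    (∀ {X : Q}, QGood X → QGood (qSwapL l X)) ∧
    (∀ {A : QA}, QGoodAbs A → QGoodAbs (qSwapLAbs l A)) := by
  induction l with
  | nil => exact ⟨id, id⟩
  | cons t l ih => exact ⟨fun h => qGood_qSwap.1 (ih.1 h), fun h => qGood_qSwap.2 (ih.2 h)⟩

theorem QGood.swap_induction {P : Q → Prop} {PA : QA → Prop}
    (hVar : ∀ xs x, P (.qVar xs x))
    (hOp : ∀ d inp binp, (∀ i X, inp i = some X → QGood X) →
      (∀ j A, binp j = some A → QGoodAbs A) → smallDom var inp → smallDom var binp →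
      (∀ i X, inp i = some X → P X) → (∀ j A, binp j = some A → PA A) →
      P (.qOp d inp binp))
    (hAbs : ∀ xs x X, QGood X → (∀ l, P (qSwapL l X)) → PA (.qAbs xs x X)) :
    (∀ X, QGood X → P X) ∧ (∀ A, QGoodAbs A → PA A) := by
  suffices h : (∀ X, QGood X → ∀ l, P (qSwapL l X)) ∧ (∀ A, QGoodAbs A → ∀ l, PA (qSwapLAbs l A))
    from ⟨fun X hX => h.1 X hX [], fun A hA => h.2 A hA []⟩
  refine QGood.induction (fun xs x l => by simpa using hVar _ _) ?_ ?_
  · intro d inp binp hinp hbinp hsinp hsbinp ihinp ihbinp l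
    rw [qSwapL_qOp]
    exact hOp d _ _ (liftP_map fun i X hX => (qGood_qSwapL l).1 (hinp i X hX))
      (liftP_map fun j A hA => (qGood_qSwapL l).2 (hbinp j A hA))
      (smallDom_map hsinp) (smallDom_map hsbinp)
      (liftP_map fun i X hX => ihinp i X hX l) (liftP_map fun j A hA => ihbinp j A hA l)
  · intro xs x X hX ih l
    rw [qSwapLAbs_qAbs]
    exact hAbs _ _ _ ((qGood_qSwapL l).1 hX) fun l' => qSwapL_append l' l X ▸ ih (l' ++ l)

theorem qFresh_qSwap_iff {z1 z2 : var} {zs ys : varsort} {y : var} {X : Q} :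
    QFresh ys y (qSwap z1 z2 zs X) ↔ QFresh ys (swapVarS var varsort zs ys z1 z2 y) X := by
  suffices h : ∀ y (X : Q), QFresh ys y X →
      QFresh ys (swapVarS var varsort zs ys z1 z2 y) (qSwap z1 z2 zs X) from
    ⟨fun hX => by simpa using h _ _ hX, fun hX => by simpa using h _ _ hX⟩
  intro y
  refine (QFresh.induction
    (PA := fun A => QFreshAbs ys (swapVarS var varsort zs ys z1 z2 y) (qSwapAbs z1 z2 zs A))
    ?_ ?_ (fun _ => .qAbs_bound) (fun _ _ _ _ ih => .qAbs_body ih)).1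
  · intro xs x hne
    refine .qVar fun h => hne ?_
    obtain ⟨rfl, hx⟩ := Prod.mk.inj h
    rw [swapVarS_injective _ _ _ _ hx]
  · intro d inp binp _ _ ihinp ihbinp
    rw [qSwap_qOp]
    exact .qOp (liftP_map ihinp) (liftP_map ihbinp)

theorem not_qFresh_qSwapL {l : List (var × var × varsort)} {ys : varsort} {v : var} {X : Q}
    (h : ¬ QFresh ys v X) : ¬ QFresh ys (swapVarL l ys v) (qSwapL l X) := by
  induction l with
  | nil => exact h
  | cons t l ih => simpa [qFresh_qSwap_iff] using ih

theorem qFreshAbs_qAbs_iff {ys xs : varsort} {v x : var} {X : Q} :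
    QFreshAbs ys v (.qAbs xs x X) ↔ (ys = xs ∧ v = x) ∨ QFresh ys v X := by
  constructor
  · rintro (_ | ⟨h⟩)
    · exact .inl ⟨rfl, rfl⟩
    · exact .inr h
  · rintro (⟨rfl, rfl⟩ | h)
    · exact .qAbs_bound
    · exact .qAbs_body h

theorem qFreshAbs_qAbs_iff_qSwap {ys xs : varsort} {z x y : var} {X : Q}
    (hy : QFresh xs y X) :
    QFreshAbs ys z (.qAbs xs x X) ↔ ((ys = xs → z ≠ y) → QFresh ys z (qSwap y x xs X)) := by
  rw [qFreshAbs_qAbs_iff, qFresh_qSwap_iff]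
  by_cases hs : ys = xs
  · subst hs
    rw [swapVarS_self]
    by_cases hzy : z = y
    · subst hzy; simp [hy]
    by_cases hzx : z = x
    · subst hzx; simp [hy]
    · simp [hzy, hzx, swapVar_of_ne hzy hzx]
  · simp [hs, swapVarS_of_ne hs]

theorem mk_nonFresh_lt (hreg : (#var).IsRegular) {X : Q} (hX : QGood X) :
    #{v | ∃ ys, ¬ QFresh ys v X} < #var := by
  refine (QGood.induction (P := fun X => #{v | ∃ ys, ¬ QFresh ys v X} < #var)
    (PA := fun A => #{v | ∃ ys, ¬ QFreshAbs ys v A} < #var)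
    ?_ ?_ ?_).1 X hX
  · intro xs x
    refine (mk_le_mk_of_subset fun v hv => ?_).trans_lt
      (mk_lt_of_finite hreg (Set.finite_singleton x))
    obtain ⟨ys, hv⟩ := hv
    by_contra hvx
    exact hv (.qVar fun h => hvx (Prod.mk.inj h).2)
  · intro d inp binp _ _ hsinp hsbinp ihinp ihbinp
    refine (mk_le_mk_of_subset fun v hv => ?_).trans_lt
      (mk_union_lt hreg (mk_setOf_input_lt hreg hsinp ihinp) (mk_setOf_input_lt hreg hsbinp ihbinp))
    obtain ⟨ys, hv⟩ := hv
    by_contra hno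
    simp only [Set.mem_union, Set.mem_ofPred_eq, not_or, not_exists, not_and] at hno
    exact hv (.qOp (fun i X h => by_contra fun hX => hno.1 i X h ys hX)
      (fun j A h => by_contra fun hA => hno.2 j A h ys hA))
  · intro xs x X _ ih
    refine (mk_le_mk_of_subset fun v hv => ?_).trans_lt ih
    obtain ⟨ys, hv⟩ := hv
    exact ⟨ys, fun h => hv (.qAbs_body h)⟩

theorem exists_fresh_var (hreg : (#var).IsRegular) {s : Set var} (hs : #s < #var)
    (Xs : List Q) (hXs : ∀ X ∈ Xs, QGood X) :
    ∃ y ∉ s, ∀ X ∈ Xs, ∀ ys, QFresh ys y X := by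
  have hsmall : #(s ∪ ⋃ X ∈ {X | X ∈ Xs}, {v | ∃ ys, ¬ QFresh ys v X} : Set var) < #var :=
    mk_union_lt hreg hs ((card_biUnion_lt_iff_forall_of_isRegular hreg
      (mk_lt_of_finite hreg Xs.finite_toSet)).2 fun X hX => mk_nonFresh_lt hreg (hXs X hX))
  obtain ⟨y, hy⟩ := compl_nonempty_of_mk_lt_mk hsmall
  simp only [Set.mem_compl_iff, Set.mem_union, Set.mem_iUnion, not_or, not_exists] at hy
  exact ⟨y, hy.1, fun X hX ys => by_contra fun h => hy.2 X hX ⟨ys, h⟩⟩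

theorem alpha_symm :
    (∀ {X Y : Q}, Alpha X Y → Alpha Y X) ∧ (∀ {A B : QA}, AlphaAbs A B → AlphaAbs B A) := by
  suffices h : (∀ X Y : Q, Alpha X Y → Alpha Y X) ∧ (∀ A B : QA, AlphaAbs A B → AlphaAbs B A) from
    ⟨fun {X Y} => h.1 X Y, fun {A B} => h.2 A B⟩
  refine Alpha.induction (fun _ _ => .qVar) ?_ ?_
  · intro d inp inp' binp binp' hinp _ hbinp _ ihinp ihbinp
    exact .qOp (fun i => (hinp i).symm) (fun i X' X h' h => ihinp i X X' h h')
      (fun j => (hbinp j).symm) (fun j A' A h' h => ihbinp j A A' h h')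
  · intro xs x x' X X' y hy hX hX' _ ih
    exact .qAbs (by simpa [or_comm] using hy) hX' hX ih

theorem qGood_of_alpha :
    (∀ {X Y : Q}, Alpha X Y → QGood X → QGood Y) ∧
    (∀ {A B : QA}, AlphaAbs A B → QGoodAbs A → QGoodAbs B) := by
  suffices h : (∀ X Y : Q, Alpha X Y → QGood X → QGood Y) ∧
      (∀ A B : QA, AlphaAbs A B → QGoodAbs A → QGoodAbs B) from
    ⟨fun {X Y} => h.1 X Y, fun {A B} => h.2 A B⟩
  refine Alpha.induction (fun _ _ _ => .qVar) ?_ ?_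
  · rintro d inp inp' binp binp' hinp _ hbinp _ ihinp ihbinp (_ | ⟨hginp, hgbinp, hsinp, hsbinp⟩)
    exact .qOp (liftP_of_liftP hinp ihinp hginp) (liftP_of_liftP hbinp ihbinp hgbinp)
      (smallDom_congr hinp hsinp) (smallDom_congr hbinp hsbinp)
  · rintro xs x x' X X' y - - - - ih ⟨hX⟩
    exact .qAbs (qGood_qSwap_iff.1 (ih (qGood_qSwap.1 hX)))

theorem qFresh_of_alpha {X Y : Q} (h : Alpha X Y) {ys : varsort} {v : var}
    (hX : QFresh ys v X) : QFresh ys v Y := by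
  refine (Alpha.induction (P := fun X Y => ∀ ys v, QFresh ys v X → QFresh ys v Y)
    (PA := fun A B => ∀ ys v, QFreshAbs ys v A → QFreshAbs ys v B)
    (fun _ _ _ _ => id) ?_ ?_).1 X Y h ys v hX
  · rintro d inp inp' binp binp' hinp _ hbinp _ ihinp ihbinp ys v (_ | ⟨hfinp, hfbinp⟩)
    exact .qOp (liftP_of_liftP hinp (fun i X X' h h' => ihinp i X X' h h' ys v) hfinp)
      (liftP_of_liftP hbinp (fun j A A' h h' => ihbinp j A A' h h' ys v) hfbinp)
  · intro xs x x' X X' y _ hX hX' _ ih ys v hv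
    rw [qFreshAbs_qAbs_iff_qSwap hX] at hv
    rw [qFreshAbs_qAbs_iff_qSwap hX']
    exact fun hvy => ih ys v (hv hvy)

theorem not_qFresh_of_alpha {X Y : Q} (h : Alpha X Y) {ys : varsort} {v : var}
    (hX : ¬ QFresh ys v X) : ¬ QFresh ys v Y :=
  fun hY => hX (qFresh_of_alpha (alpha_symm.1 h) hY)

theorem alpha_refl (hreg : (#var).IsRegular) :
    (∀ {X : Q}, QGood X → Alpha X X) ∧ (∀ {A : QA}, QGoodAbs A → AlphaAbs A A) := by
  suffices h : (∀ X : Q, QGood X → Alpha X X) ∧ (∀ A : QA, QGoodAbs A → AlphaAbs A A) from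
    ⟨fun {X} => h.1 X, fun {A} => h.2 A⟩
  refine QGood.swap_induction (fun _ _ => .qVar) ?_ ?_
  · intro d inp binp _ _ _ _ ihinp ihbinp
    refine .qOp (fun _ => .rfl) ?_ (fun _ => .rfl) ?_
    · intro i X X' h h'
      obtain rfl : X = X' := Option.some_injective _ (h.symm.trans h')
      exact ihinp i X h
    · intro j A A' h h'
      obtain rfl : A = A' := Option.some_injective _ (h.symm.trans h')
      exact ihbinp j A h
  · intro xs x X hX ih
    obtain ⟨y, hy, hyX⟩ := exists_fresh_var hreg (mk_lt_of_finite hreg (Set.finite_singleton x))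
      [X] (by simpa using hX)
    exact .qAbs (by simpa using hy) (hyX X (by simp) xs) (hyX X (by simp) xs)
      (ih [(y, x, xs)])

theorem swapVarL_rename_body_eq {xs : varsort} {x x' y u : var} {X X' : Q}
    {l1 l2 : List (var × var × varsort)} (hyX : QFresh xs y X) (hyX' : QFresh xs y X')
    (hXX' : Alpha (qSwap y x xs X) (qSwap y x' xs X')) (hu : QFresh xs u (qSwapL l1 X))
    (hl : ∀ ys v, ¬ QFreshAbs ys v (.qAbs xs x X) → swapVarL l1 ys v = swapVarL l2 ys v)
    {ys : varsort} {v : var} (hv : ¬ QFresh ys v (qSwap y x xs X)) :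
    swapVarL ((u, swapVarL l1 xs x, xs) :: l1 ++ [(y, x, xs)]) ys v =
      swapVarL ((u, swapVarL l2 xs x', xs) :: l2 ++ [(y, x', xs)]) ys v := by
  simp only [List.cons_append, swapVarL_cons, swapVarL_append, swapVarL_nil]
  by_cases hs : ys = xs
  swap
  · simp only [swapVarS_of_ne hs]
    refine hl ys v ?_
    rw [qFreshAbs_qAbs_iff]
    simpa [hs, qFresh_qSwap_iff, swapVarS_of_ne hs] using hv
  subst hs
  simp only [swapVarS_self]
  by_cases hvy : v = y
  · simp [hvy]
  have hvx : v ≠ x := by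
    rintro rfl
    exact hv (by rwa [qFresh_qSwap_iff, swapVarS_self, swapVar_right])
  have hvx' : v ≠ x' := by
    rintro rfl
    exact not_qFresh_of_alpha hXX' hv (by rwa [qFresh_qSwap_iff, swapVarS_self, swapVar_right])
  have hvX : ¬ QFresh ys v X := by
    rwa [qFresh_qSwap_iff, swapVarS_self, swapVar_of_ne hvy hvx] at hv
  have hl1 := hl ys v (by simp [qFreshAbs_qAbs_iff, hvx, hvX])
  have hvu : swapVarL l1 ys v ≠ u := fun h => not_qFresh_qSwapL hvX (h ▸ hu)
  rw [swapVar_of_ne hvy hvx, swapVar_of_ne hvy hvx',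
    swapVar_of_ne hvu ((swapVarL_injective l1 ys).ne hvx), hl1,
    swapVar_of_ne (hl1 ▸ hvu) ((swapVarL_injective l2 ys).ne hvx')]

-- Two swap lists rather than one: renaming a bound variable in the abstraction case composes
-- the renaming with further swaps, on each side differently.
theorem alpha_qSwapL_qSwapL (hreg : (#var).IsRegular) {X X' : Q} (h : Alpha X X')
    (hX : QGood X) {l1 l2 : List (var × var × varsort)}
    (hl : ∀ ys v, ¬ QFresh ys v X → swapVarL l1 ys v = swapVarL l2 ys v) :
    Alpha (qSwapL l1 X) (qSwapL l2 X') := by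
  refine (Alpha.induction
    (P := fun X X' => QGood X → ∀ l1 l2, (∀ ys v, ¬ QFresh ys v X →
      swapVarL l1 ys v = swapVarL l2 ys v) → Alpha (qSwapL l1 X) (qSwapL l2 X'))
    (PA := fun A A' => QGoodAbs A → ∀ l1 l2, (∀ ys v, ¬ QFreshAbs ys v A →
      swapVarL l1 ys v = swapVarL l2 ys v) → AlphaAbs (qSwapLAbs l1 A) (qSwapLAbs l2 A'))
    ?_ ?_ ?_).1 X X' h hX l1 l2 hl
  · intro xs x _ l1 l2 hl
    rw [qSwapL_qVar, qSwapL_qVar, hl xs x (by rintro (⟨h⟩ | _); exact h rfl)]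
    exact .qVar
  · rintro d inp inp' binp binp' hinp _ hbinp _ ihinp ihbinp (_ | ⟨hginp, hgbinp, -, -⟩) l1 l2 hl
    rw [qSwapL_qOp, qSwapL_qOp]
    refine .qOp (by simpa using hinp) ?_ (by simpa using hbinp) ?_
    · intro i Y Y' h h'
      obtain ⟨X, hX, rfl⟩ := Option.map_eq_some_iff.1 h
      obtain ⟨X', hX', rfl⟩ := Option.map_eq_some_iff.1 h'
      exact ihinp i X X' hX hX' (hginp i X hX) l1 l2 fun ys v hv =>
        hl ys v (by rintro (_ | ⟨hf, -⟩); exact hv (hf i X hX))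
    · intro j B B' h h'
      obtain ⟨A, hA, rfl⟩ := Option.map_eq_some_iff.1 h
      obtain ⟨A', hA', rfl⟩ := Option.map_eq_some_iff.1 h'
      exact ihbinp j A A' hA hA' (hgbinp j A hA) l1 l2 fun ys v hv =>
        hl ys v (by rintro (_ | ⟨-, hf⟩); exact hv (hf j A hA))
  · rintro xs x x' X X' y - hyX hyX' hXX' ih ⟨hX⟩ l1 l2 hl
    have hX' : QGood X' := qGood_qSwap_iff.1 (qGood_of_alpha.1 hXX' (qGood_qSwap.1 hX))
    obtain ⟨u, hu, huf⟩ := exists_fresh_var hreg (s := {swapVarL l1 xs x, swapVarL l2 xs x'})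
      (mk_lt_of_finite hreg (Set.toFinite _)) [qSwapL l1 X, qSwapL l2 X']
      (by simp [(qGood_qSwapL l1).1 hX, (qGood_qSwapL l2).1 hX'])
    have hu1 := huf (qSwapL l1 X) (by simp) xs
    rw [qSwapLAbs_qAbs, qSwapLAbs_qAbs]
    refine .qAbs hu hu1 (huf (qSwapL l2 X') (by simp) xs) ?_
    -- renaming `x` to `u` on the left is: undo `y ↔ x`, apply `l1`, then swap `u ↔ l1 x`
    simpa [qSwapL_append] using ih (qGood_qSwap.1 hX)
      ((u, swapVarL l1 xs x, xs) :: l1 ++ [(y, x, xs)])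
      ((u, swapVarL l2 xs x', xs) :: l2 ++ [(y, x', xs)])
      fun ys v hv => swapVarL_rename_body_eq hyX hyX' hXX' hu1 hl hv

theorem alpha_qSwap (hreg : (#var).IsRegular) {X X' : Q} (h : Alpha X X') (hX : QGood X)
    (z1 z2 : var) (zs : varsort) : Alpha (qSwap z1 z2 zs X) (qSwap z1 z2 zs X') :=
  alpha_qSwapL_qSwapL hreg h hX (l1 := [(z1, z2, zs)]) (l2 := [(z1, z2, zs)]) fun _ _ _ => rfl

theorem alpha_qSwap_qSwap (hreg : (#var).IsRegular) {X : Q} (hX : QGood X) {xs : varsort}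
    {u b : var} (hu : QFresh xs u X) (hb : QFresh xs b X) (a : var) :
    Alpha (qSwap u a xs X) (qSwap u b xs (qSwap b a xs X)) := by
  refine alpha_qSwapL_qSwapL hreg ((alpha_refl hreg).1 hX) hX
    (l1 := [(u, a, xs)]) (l2 := [(u, b, xs), (b, a, xs)]) fun ys v hv => ?_
  simp only [swapVarL_cons, swapVarL_nil]
  by_cases hs : ys = xs
  · subst hs
    simp only [swapVarS_self]
    exact (swapVar_swapVar_of_ne (fun h : v = u => hv (h ▸ hu)) (fun h : v = b => hv (h ▸ hb))).symm
  · simp only [swapVarS_of_ne hs]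

theorem alpha_trans (hreg : (#var).IsRegular) :
    (∀ {X Y Z : Q}, QGood X → Alpha X Y → Alpha Y Z → Alpha X Z) ∧
    (∀ {A B C : QA}, QGoodAbs A → AlphaAbs A B → AlphaAbs B C → AlphaAbs A C) := by
  suffices h : (∀ X : Q, QGood X → ∀ Y Z, Alpha X Y → Alpha Y Z → Alpha X Z) ∧
      (∀ A : QA, QGoodAbs A → ∀ B C, AlphaAbs A B → AlphaAbs B C → AlphaAbs A C) from
    ⟨fun {X Y Z} hX => h.1 X hX Y Z, fun {A B C} hA => h.2 A hA B C⟩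
  refine QGood.swap_induction (fun _ _ _ _ h1 h2 => by cases h1; exact h2) ?_ ?_
  · rintro d inp binp - - - - ihinp ihbinp _ _
      (_ | ⟨hinp1, hal1, hbinp1, hbal1⟩) (_ | ⟨hinp2, hal2, hbinp2, hbal2⟩)
    refine .qOp (fun i => (hinp1 i).trans (hinp2 i)) ?_ (fun j => (hbinp1 j).trans (hbinp2 j)) ?_
    · intro i X Z hX hZ
      obtain ⟨Y, hY⟩ := exists_eq_some_of_none_iff hinp1 hX
      exact ihinp i X hX Y Z (hal1 i X Y hX hY) (hal2 i Y Z hY hZ)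
    · intro j A C hA hC
      obtain ⟨B, hB⟩ := exists_eq_some_of_none_iff hbinp1 hA
      exact ihbinp j A hA B C (hbal1 j A B hA hB) (hbal2 j B C hB hC)
  · rintro xs x X hX ih _ _ ⟨-, hfX, hfY, hXY⟩ ⟨-, hfY', hfZ, hYZ⟩
    rename_i x' Y y1 x'' Z y2
    have hY := qGood_qSwap_iff.1 (qGood_of_alpha.1 hXY (qGood_qSwap.1 hX))
    have hZ := qGood_qSwap_iff.1 (qGood_of_alpha.1 hYZ (qGood_qSwap.1 hY))
    obtain ⟨u, hu, huf⟩ := exists_fresh_var hreg (s := {x, x''})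
      (mk_lt_of_finite hreg (Set.toFinite _)) [X, Y, Z] (by simp [hX, hY, hZ])
    have huX := huf X (by simp) xs
    have huY := huf Y (by simp) xs
    have huZ := huf Z (by simp) xs
    refine .qAbs hu huX huZ ?_
    have step : ∀ {V W}, Alpha (qSwap u x xs X) V → Alpha V W → Alpha (qSwap u x xs X) W :=
      ih [(u, x, xs)] _ _
    -- pass from `u ↔ x` to `u ↔ y1`, through `Y`, then to `u ↔ y2`, through `Z`
    exact step (step (step (step (step
      (alpha_qSwap_qSwap hreg hX huX hfX x)
      (alpha_qSwap hreg hXY (qGood_qSwap.1 hX) u y1 xs))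
      (alpha_symm.1 (alpha_qSwap_qSwap hreg hY huY hfY x')))
      (alpha_qSwap_qSwap hreg hY huY hfY' x'))
      (alpha_qSwap hreg hYZ (qGood_qSwap.1 hY) u y2 xs))
      (alpha_symm.1 (alpha_qSwap_qSwap hreg hZ huZ hfZ x''))

theorem alphaAbs_qAbs (hreg : (#var).IsRegular) {X X' : Q} (hX : QGood X) (h : Alpha X X')
    (xs : varsort) (x : var) : AlphaAbs (.qAbs xs x X) (.qAbs xs x X') := by
  have hX' := qGood_of_alpha.1 h hX
  obtain ⟨z, hz, hzf⟩ := exists_fresh_var hreg (mk_lt_of_finite hreg (Set.finite_singleton x))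
    [X, X'] (by simp [hX, hX'])
  exact .qAbs (by simpa using hz) (hzf X (by simp) xs) (hzf X' (by simp) xs)
    (alpha_qSwap hreg h hX z x xs)

theorem alphaAbs_qAbs_qSwap (hreg : (#var).IsRegular) {X : Q} (hX : QGood X) {xs : varsort}
    {y : var} (hy : QFresh xs y X) (x : var) :
    AlphaAbs (.qAbs xs x X) (.qAbs xs y (qSwap y x xs X)) := by
  obtain ⟨z, hz, hzf⟩ := exists_fresh_var hreg (s := {x, y})
    (mk_lt_of_finite hreg (Set.toFinite _)) [X, qSwap y x xs X] (by simp [hX, qGood_qSwap.1 hX])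
  exact .qAbs hz (hzf X (by simp) xs) (hzf _ (by simp) xs)
    (alpha_qSwap_qSwap hreg hX (hzf X (by simp) xs) hy x)

theorem eqvGen_iff_and_rel {α : Type*} {r : α → α → Prop} {P : α → Prop}
    (hP : ∀ {a b}, r a b → (P a ↔ P b)) (hrefl : ∀ {a}, P a → r a a)
    (hsymm : ∀ {a b}, r a b → r b a) (htrans : ∀ {a b c}, P a → r a b → r b c → r a c)
    {a b : α} (h : Relation.EqvGen r a b) : (P a ↔ P b) ∧ (P a → r a b) := by
  induction h with
  | rel a b hab => exact ⟨hP hab, fun _ => hab⟩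
  | refl a => exact ⟨.rfl, hrefl⟩
  | symm a b _ ih => exact ⟨ih.1.symm, fun hb => hsymm (ih.2 (ih.1.2 hb))⟩
  | trans a b c _ _ ih1 ih2 =>
    exact ⟨ih1.1.trans ih2.1, fun ha => htrans ha (ih1.2 ha) (ih2.2 (ih1.1.1 ha))⟩

theorem good_tmk_and_alpha_trep (hreg : (#var).IsRegular) {X : Q} (hX : QGood X) :
    good (tmk X) ∧ Alpha (trep (tmk X)) X := by
  have h := eqvGen_iff_and_rel
    (fun h => ⟨qGood_of_alpha.1 h, qGood_of_alpha.1 (alpha_symm.1 h)⟩)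
    (alpha_refl hreg).1 alpha_symm.1 (alpha_trans hreg).1
    (Quot.eq.1 (Quot.out_eq (tmk X)).symm : Relation.EqvGen Alpha X (trep (tmk X)))
  exact ⟨h.1.1 hX, alpha_symm.1 (h.2 hX)⟩

theorem goodAbs_amk_and_alphaAbs_arep (hreg : (#var).IsRegular) {A : QA} (hA : QGoodAbs A) :
    goodAbs (amk A) ∧ AlphaAbs (arep (amk A)) A := by
  have h := eqvGen_iff_and_rel
    (fun h => ⟨qGood_of_alpha.2 h, qGood_of_alpha.2 (alpha_symm.2 h)⟩)
    (alpha_refl hreg).2 alpha_symm.2 (alpha_trans hreg).2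
    (Quot.eq.1 (Quot.out_eq (amk A)).symm : Relation.EqvGen AlphaAbs A (arep (amk A)))
  exact ⟨h.1.1 hA, alpha_symm.2 (h.2 hA)⟩

theorem Op_map_tmk (hreg : (#var).IsRegular) {d : opsym} {inp : index → Option Q}
    {binp : bindex → Option QA} (hinp : ∀ i X, inp i = some X → QGood X)
    (hbinp : ∀ j A, binp j = some A → QGoodAbs A) :
    Op d (fun i => (inp i).map tmk) (fun j => (binp j).map amk) = tmk (.qOp d inp binp) := by
  refine Quot.sound (.qOp (fun i => by simp [liftF]) ?_ (fun j => by simp [liftF]) ?_)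
  · intro i Y X hY hX
    simp only [liftF, hX, Option.map_some, Option.some_inj] at hY
    exact hY ▸ (good_tmk_and_alpha_trep hreg (hinp i X hX)).2
  · intro j B A hB hA
    simp only [liftF, hA, Option.map_some, Option.some_inj] at hB
    exact hB ▸ (goodAbs_amk_and_alphaAbs_arep hreg (hbinp j A hA)).2

theorem Abs_tmk (hreg : (#var).IsRegular) {X : Q} (hX : QGood X) (xs : varsort) (x : var) :
    Abs xs x (tmk X) = amk (.qAbs xs x X) :=
  Quot.sound (alphaAbs_qAbs hreg (good_tmk_and_alpha_trep hreg hX).1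
    (good_tmk_and_alpha_trep hreg hX).2 xs x)

theorem amk_qAbs_eq_Abs (hreg : (#var).IsRegular) {X : Q} (hX : QGood X) {xs : varsort}
    {y : var} (hy : QFresh xs y X) (x : var) :
    amk (.qAbs xs x X) = Abs xs y (tmk (qSwap y x xs X)) := by
  rw [Abs_tmk hreg (qGood_qSwap.1 hX)]
  exact Quot.sound (alphaAbs_qAbs_qSwap hreg hX hy x)

/-- fresh induction. -/
theorem fresh_induction (hinf : Cardinal.aleph0 ≤ Cardinal.mk var)
    (hreg : (Cardinal.mk var).IsRegular)
    {param : Type u} (varsOf : param → varsort → Set var)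
    (φ : Term var varsort index bindex opsym → param → Prop)
    (φAbs : Abstr var varsort index bindex opsym → param → Prop)
    (h1 : ∀ xs p, Cardinal.mk (varsOf p xs) < Cardinal.mk var)
    (h2 : ∀ xs x p, φ (Var xs x) p)
    (h3 : ∀ d inp binp p, smallDom var inp → smallDom var binp →
      liftP (fun X => good X ∧ ∀ q, φ X q) inp →
      liftP (fun A => goodAbs A ∧ ∀ q, φAbs A q) binp →
      φ (Op d inp binp) p)
    (h4 : ∀ xs x X p, good X → φ X p → x ∉ varsOf p xs → φAbs (Abs xs x X) p) :
    (∀ X p, good X → φ X p) ∧ (∀ A p, goodAbs A → φAbs A p) := by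
  have hq : (∀ X : Q, QGood X → ∀ p, φ (tmk X) p) ∧
      (∀ A : QA, QGoodAbs A → ∀ p, φAbs (amk A) p) := by
    refine QGood.swap_induction (fun xs x p => h2 xs x p) ?_ ?_
    · intro d inp binp hinp hbinp hsinp hsbinp ihinp ihbinp p
      rw [← Op_map_tmk hreg hinp hbinp]
      exact h3 d _ _ p (smallDom_map hsinp) (smallDom_map hsbinp)
        (liftP_map fun i X hX => ⟨(good_tmk_and_alpha_trep hreg (hinp i X hX)).1, ihinp i X hX⟩)
        (liftP_map fun j A hA =>
          ⟨(goodAbs_amk_and_alphaAbs_arep hreg (hbinp j A hA)).1, ihbinp j A hA⟩)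
    · intro xs x X hX ih p
      obtain ⟨y, hy, hyX⟩ := exists_fresh_var hreg (h1 xs p) [X] (by simpa using hX)
      rw [amk_qAbs_eq_Abs hreg hX (hyX X (by simp) xs)]
      exact h4 xs y _ p (good_tmk_and_alpha_trep hreg (qGood_qSwap.1 hX)).1 (ih [(y, x, xs)] p) hy
  exact ⟨fun X p hX => Quot.out_eq X ▸ hq.1 _ hX p, fun A p hA => Quot.out_eq A ▸ hq.2 _ hA p⟩

end Binding
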